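/- Let k be a natural number and N : Fin k → ℕ with N i ≥ 1 for all i, and let G = Π i, ZMod (N i). Then the |G|×|G| complex matrix M indexed by G with entries M_{a,y} = cas(2π·Σ i, (a i).val·(y i).val/(N i)) / √|G| is symmetric, satisfies M² = 1, and is a member of the unitary group. -/
import Mathlib


/-- The `cas` function: `cas x = cos x + sin x`. -/
noncomputable def cas (x : ℝ) : ℝ := Real.cos x + Real.sin x

/-- The additive Hartley transform over `G = Π i, ZMod (N i)`. -/
noncomputable def additiveHartley (k : ℕ) (N : Fin k → ℕ) [∀ i, NeZero (N i)] :
    Matrix (∀ i, ZMod (N i)) (∀ i, ZMod (N i)) ℂ :=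
  fun a y =>
    ((cas (2 * Real.pi * ∑ i, ((a i).val * (y i).val : ℝ) / (N i)) /
        Real.sqrt (Fintype.card (∀ i, ZMod (N i))) : ℝ) : ℂ)

section aux

variable {k : ℕ} {N : Fin k → ℕ} [∀ i, NeZero (N i)]

/-- The exponential character. -/
noncomputable def hartleyE (a y : ∀ i, ZMod (N i)) : ℂ :=
  ∏ i, ZMod.stdAddChar (a i * y i)

lemma hartleyE_eq_exp (a y : ∀ i, ZMod (N i)) :
    hartleyE a y = Complex.exp
      ((2 * Real.pi * ∑ i, ((a i).val * (y i).val : ℝ) / (N i) : ℝ) * Complex.I) := by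
  have h : ∀ i, ZMod.stdAddChar (a i * y i) =
      Complex.exp (((2 * Real.pi * (((a i).val * (y i).val : ℝ) / (N i)) : ℝ)) * Complex.I) := by
    intro i
    have h1 : (a i * y i : ZMod (N i)) = ((((a i).val * (y i).val : ℕ) : ℤ) : ZMod (N i)) := by
      push_cast [ZMod.natCast_val, ZMod.intCast_zmod_cast]
      simp [ZMod.natCast_val, ZMod.cast_id]
    rw [h1, ZMod.stdAddChar_coe]
    congr 1
    push_cast
    ring
  rw [hartleyE]
  simp_rw [h, ← Complex.exp_sum]
  congr 1
  rw [← Finset.sum_mul, ← Complex.ofReal_sum, ← Finset.mul_sum]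

lemma hartleyE_add (a b y : ∀ i, ZMod (N i)) :
    hartleyE (a + b) y = hartleyE a y * hartleyE b y := by
  rw [hartleyE, hartleyE, hartleyE, ← Finset.prod_mul_distrib]
  refine Finset.prod_congr rfl fun i _ => ?_
  rw [Pi.add_apply, add_mul, AddChar.map_add_eq_mul]

lemma hartleyE_conj (b y : ∀ i, ZMod (N i)) :
    (starRingEnd ℂ) (hartleyE b y) = hartleyE (-b) y := by
  rw [hartleyE, hartleyE, map_prod]
  refine Finset.prod_congr rfl fun i _ => ?_
  rw [ZMod.stdAddChar_apply, ZMod.stdAddChar_apply, ← Circle.coe_inv_eq_conj,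
    ← AddChar.map_neg_eq_inv, Pi.neg_apply, neg_mul]

lemma hartleyE_sum (c : ∀ i, ZMod (N i)) :
    ∑ y, hartleyE c y =
      if c = 0 then (Fintype.card (∀ i, ZMod (N i)) : ℂ) else 0 := by
  classical
  have h1 : ∑ y, hartleyE c y = ∏ i, ∑ x : ZMod (N i), ZMod.stdAddChar (c i * x) := by
    rw [Finset.prod_univ_sum]
    rw [← Fintype.piFinset_univ]
    rfl
  rw [h1]
  have h2 : ∀ i, ∑ x : ZMod (N i), ZMod.stdAddChar (c i * x) =
      if c i = 0 then ((N i : ℂ)) else 0 := by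
    intro i
    have : ∀ x : ZMod (N i), ZMod.stdAddChar (c i * x) =
        (AddChar.mulShift ZMod.stdAddChar (c i)) x := fun x => rfl
    simp_rw [this]
    rw [AddChar.sum_eq_ite]
    by_cases hc : c i = 0
    · simp [hc, AddChar.mulShift_zero, ZMod.card]
      have : (1 : AddChar (ZMod (N i)) ℂ) = 0 := rfl
      simp [← this]
    · have hne : AddChar.mulShift (ZMod.stdAddChar (N := N i)) (c i) ≠ 1 :=
        ZMod.isPrimitive_stdAddChar (N i) hc
      have hne0 : AddChar.mulShift (ZMod.stdAddChar (N := N i)) (c i) ≠ 0 := hne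
      simp [hne0, hc]
  simp_rw [h2]
  by_cases hc : c = 0
  · simp [hc, Fintype.card_pi, ZMod.card]
  · obtain ⟨i, hi⟩ : ∃ i, c i ≠ 0 := by
      by_contra h
      push_neg at h
      exact hc (funext h)
    rw [if_neg hc]
    exact Finset.prod_eq_zero (Finset.mem_univ i) (by simp [hi])

lemma cas_eq_re_add_im (a y : ∀ i, ZMod (N i)) :
    (cas (2 * Real.pi * ∑ i, ((a i).val * (y i).val : ℝ) / (N i)) : ℝ) =
      (hartleyE a y).re + (hartleyE a y).im := by
  rw [hartleyE_eq_exp, cas, Complex.exp_ofReal_mul_I_re, Complex.exp_ofReal_mul_I_im]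

lemma re_im_mul (z w : ℂ) :
    (z.re + z.im) * (w.re + w.im) = (z * (starRingEnd ℂ) w).re + (z * w).im := by
  simp [Complex.mul_re, Complex.mul_im, Complex.conj_re, Complex.conj_im]
  ring

lemma hartley_key (a b : ∀ i, ZMod (N i)) :
    ∑ y : ∀ i, ZMod (N i), cas (2 * Real.pi * ∑ i, ((a i).val * (y i).val : ℝ) / (N i)) *
        cas (2 * Real.pi * ∑ i, ((b i).val * (y i).val : ℝ) / (N i)) =
      if a = b then (Fintype.card (∀ i, ZMod (N i)) : ℝ) else 0 := by
  classical
  have key : ∀ y : ∀ i, ZMod (N i), cas (2 * Real.pi * ∑ i, ((a i).val * (y i).val : ℝ) / (N i)) *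
      cas (2 * Real.pi * ∑ i, ((b i).val * (y i).val : ℝ) / (N i)) =
      (hartleyE a y * hartleyE (-b) y).re + (hartleyE a y * hartleyE b y).im := by
    intro y
    rw [cas_eq_re_add_im, cas_eq_re_add_im, re_im_mul, hartleyE_conj]
  simp_rw [key]
  rw [Finset.sum_add_distrib, ← Complex.re_sum, ← Complex.im_sum]
  simp_rw [← hartleyE_add]
  rw [hartleyE_sum, hartleyE_sum]
  have h2 : (if a + b = 0 then ((Fintype.card (∀ i, ZMod (N i)) : ℂ)) else 0).im = 0 := by
    split_ifs
    · exact Complex.natCast_im _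
    · exact Complex.zero_im
  rw [h2, add_zero]
  have h3 : a + -b = 0 ↔ a = b := add_neg_eq_zero
  by_cases hab : a = b
  · rw [if_pos (h3.mpr hab), if_pos hab, Complex.natCast_re]
  · rw [if_neg (fun h => hab (h3.mp h)), if_neg hab, Complex.zero_re]

end aux

/-- The additive Hartley transform over `G = Π i, ZMod (N i)` is symmetric, squares to
the identity, and is a member of the unitary group. -/
theorem additiveHartley_symm_sq_one_unitary (k : ℕ) (N : Fin k → ℕ)
    [∀ i, NeZero (N i)] :
    (additiveHartley k N).IsSymm ∧
      additiveHartley k N * additiveHartley k N = 1 ∧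
        additiveHartley k N ∈ Matrix.unitaryGroup (∀ i, ZMod (N i)) ℂ := by
  classical
  have hc0 : (0 : ℝ) ≤ (Fintype.card (∀ i, ZMod (N i)) : ℝ) := Nat.cast_nonneg _
  have hcne : (Fintype.card (∀ i, ZMod (N i)) : ℝ) ≠ 0 := by
    exact_mod_cast Fintype.card_ne_zero
  have hS : (additiveHartley k N).IsSymm := by
    ext a b
    rw [Matrix.transpose_apply]
    unfold additiveHartley
    have h : (∑ i, ((b i).val * (a i).val : ℝ) / (N i)) =
        ∑ i, ((a i).val * (b i).val : ℝ) / (N i) :=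
      Finset.sum_congr rfl fun i _ => by rw [mul_comm ((b i).val : ℝ)]
    rw [h]
  have hM : additiveHartley k N * additiveHartley k N = 1 := by
    ext a b
    rw [Matrix.mul_apply, Matrix.one_apply]
    simp_rw [fun j => hS.apply b j]
    unfold additiveHartley
    simp_rw [← Complex.ofReal_mul, ← Complex.ofReal_sum, div_mul_div_comm,
      Real.mul_self_sqrt hc0, ← Finset.sum_div, hartley_key]
    by_cases hab : a = b
    · rw [if_pos hab, if_pos hab, div_self hcne, Complex.ofReal_one]
    · rw [if_neg hab, if_neg hab, zero_div, Complex.ofReal_zero]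
  have hstar : star (additiveHartley k N) = additiveHartley k N := by
    ext a b
    rw [Matrix.star_apply, hS.apply]
    exact Complex.conj_ofReal _
  exact ⟨hS, hM, by rw [Matrix.mem_unitaryGroup_iff, hstar]; exact hM⟩
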